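/- Assume the hierarchy S is well-formed. Then the join operator on the extended hierarchy is associative: join(join(x, y), z) = join(x, join(y, z)) for all x, y, z in the extended hierarchy. -/

import Mathlib

/-!
In a well-founded order every common upper bound of `a` and `b` lies above a minimal one, i.e.
above an element of `mcs a b`. So if `mcs a b = {c}` then `c` is the least upper bound of `a`
and `b`, and if `mcs a b` is empty then `a` and `b` have no upper bound at all. In a well-formed
hierarchy these are the only cases, hence `hjoin x y` is the least upper bound of `x` and `y` in
`WithTop S`, and a binary supremum is associative.
-/

/-- Minimal common subclasses of `a` and `b`: the minimal elements of the set
`{c | a ≤ c ∧ b ≤ c}` of common upper bounds of `a` and `b`. -/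
def mcs {S : Type*} [PartialOrder S] (a b : S) : Set S :=
  {c | Minimal (fun c => a ≤ c ∧ b ≤ c) c}

open Classical in
/-- The join operator on the extended hierarchy `WithTop S`:
`join a b = c` if `a, b ∈ S` and `mcs a b = {c}`, and `⊤` otherwise. -/
noncomputable def hjoin {S : Type*} [PartialOrder S] : WithTop S → WithTop S → WithTop S
  | some a, some b => if h : ∃ c, mcs a b = {c} then some h.choose else ⊤
  | _, _ => ⊤

section

variable {S : Type*} [PartialOrder S]

lemma hjoin_coe_of_mcs_eq_singleton {a b c : S} (h : mcs a b = {c}) :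
    hjoin (a : WithTop S) b = c := by
  have hex : ∃ c, mcs a b = {c} := ⟨c, h⟩
  have hc : hex.choose = c := Set.singleton_injective (hex.choose_spec.symm.trans h)
  exact (dif_pos hex).trans (congrArg WithTop.some hc)

lemma hjoin_coe_of_forall_mcs_ne_singleton {a b : S} (h : ∀ c, mcs a b ≠ {c}) :
    hjoin (a : WithTop S) b = ⊤ :=
  dif_neg (not_exists.mpr h)

end

section WellFounded

variable {S : Type*} [PartialOrder S] [WellFoundedLT S]

lemma exists_mem_mcs_le {a b d : S} (had : a ≤ d) (hbd : b ≤ d) : ∃ c ∈ mcs a b, c ≤ d := by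
  obtain ⟨c, hcd, hc⟩ := exists_minimal_le_of_wellFoundedLT (fun c => a ≤ c ∧ b ≤ c) d ⟨had, hbd⟩
  exact ⟨c, hc, hcd⟩

lemma le_iff_of_mcs_eq_singleton {a b c : S} (h : mcs a b = {c}) (d : S) :
    c ≤ d ↔ a ≤ d ∧ b ≤ d := by
  have hc : c ∈ mcs a b := h ▸ rfl
  refine ⟨fun hcd => ⟨hc.1.1.trans hcd, hc.1.2.trans hcd⟩, fun ⟨had, hbd⟩ => ?_⟩
  obtain ⟨e, he, hed⟩ := exists_mem_mcs_le had hbd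
  rw [h, Set.mem_singleton_iff] at he
  exact he ▸ hed

lemma not_upper_bound_of_forall_mcs_ne_singleton {a b : S} (hwf : (mcs a b).Subsingleton)
    (h : ∀ c, mcs a b ≠ {c}) (d : S) : ¬(a ≤ d ∧ b ≤ d) := by
  rintro ⟨had, hbd⟩
  obtain ⟨e, he, -⟩ := exists_mem_mcs_le had hbd
  exact h e (hwf.eq_singleton_of_mem he)

lemma hjoin_le_iff (hwf : ∀ a b : S, (mcs a b).Subsingleton) (x y u : WithTop S) :
    hjoin x y ≤ u ↔ x ≤ u ∧ y ≤ u := by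
  match x, y with
  | ⊤, y =>
    simp only [hjoin]
    exact ⟨fun h => ⟨h, le_top.trans h⟩, And.left⟩
  | (a : S), ⊤ =>
    simp only [hjoin]
    exact ⟨fun h => ⟨le_top.trans h, h⟩, And.right⟩
  | (a : S), (b : S) =>
    by_cases h : ∃ c, mcs a b = {c}
    · obtain ⟨c, hc⟩ := h
      rw [hjoin_coe_of_mcs_eq_singleton hc]
      cases u with
      | top => simp
      | coe d => simpa using le_iff_of_mcs_eq_singleton hc d
    · push Not at h
      rw [hjoin_coe_of_forall_mcs_ne_singleton h]
      cases u with
      | top => simp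
      | coe d => simpa using not_upper_bound_of_forall_mcs_ne_singleton (hwf a b) h d

end WellFounded

/-- In a well-formed hierarchy, the join operator is associative. -/
theorem hjoin_assoc {S : Type*} [Fintype S] [PartialOrder S]
    (hwf : ∀ a b : S, (mcs a b).Subsingleton) (x y z : WithTop S) :
    hjoin (hjoin x y) z = hjoin x (hjoin y z) :=
  eq_of_forall_ge_iff fun u => by simp only [hjoin_le_iff hwf, and_assoc]
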